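/- Let A be the group with presentation ⟨a, b | a^k b = b a^k⟩ where k ≥ 2. Then the center of A is the infinite cyclic subgroup generated by c = a^k, and the quotient A/Z(A) is isomorphic to the free product C_k ⋆ ℤ. -/

import Mathlib

/-!
The power `c = aᵏ` is central, and modulo `⟨c⟩` the relator `aᵏ b a⁻ᵏ b⁻¹` follows from `aᵏ = 1`;
so the third isomorphism theorem gives `A ⧸ ⟨c⟩ ≃* ⟨u, v | uᵏ⟩ ≃* C_k ⋆ ℤ`. A free product of two
nontrivial groups has trivial center (conjugating a letter of another factor by a nontrivial reduced
word only makes the word longer), hence `Z(A) = ⟨c⟩`. The map `A → ℤ`, `a ↦ 1`, `b ↦ 0`, sends `c`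
to `k ≠ 0`, so `c` has infinite order.
-/

/-- Relator for `A = ⟨a, b | aᵏ b = b aᵏ⟩`, with `a = of 0`, `b = of 1`. -/
def relEvenDihedral (k : ℕ) : Set (FreeGroup (Fin 2)) :=
  {FreeGroup.of 0 ^ k * FreeGroup.of 1 * (FreeGroup.of 0 ^ k)⁻¹ * (FreeGroup.of 1)⁻¹}

/-- Relators for the free product `C_k ⋆ ℤ = ⟨u, v | uᵏ = 1⟩`. -/
def relCkZ (k : ℕ) : Set (FreeGroup (Fin 2)) :=
  {FreeGroup.of 0 ^ k}

open Multiplicative Monoid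

section ZModHom

variable {G : Type*} [Group G]

def zmodPowersHom (n : ℕ) (g : G) (hg : g ^ n = 1) : Multiplicative (ZMod n) →* G :=
  AddMonoidHom.toMultiplicativeLeft
    (ZMod.lift n ⟨(zpowersHom G g).toAdditiveRight, by simp [hg]⟩)

@[simp]
theorem zmodPowersHom_ofAdd_one (n : ℕ) (g : G) (hg : g ^ n = 1) :
    zmodPowersHom n g hg (ofAdd 1) = g := by
  have := ZMod.lift_coe n ⟨(zpowersHom G g).toAdditiveRight, by simp [hg]⟩ 1
  simp only [Int.cast_one] at this
  simp [zmodPowersHom, this]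

theorem MonoidHom.ext_mzmod {n : ℕ} {f f' : Multiplicative (ZMod n) →* G}
    (h : f (ofAdd 1) = f' (ofAdd 1)) : f = f' := by
  refine MonoidHom.ext fun x => ?_
  obtain ⟨m, hm⟩ := ZMod.intCast_surjective (toAdd x)
  have hx : x = ofAdd 1 ^ m := by rw [← ofAdd_zsmul, zsmul_one, hm, ofAdd_toAdd]
  rw [hx, map_zpow, map_zpow, h]

end ZModHom

namespace PresentedGroup

variable {ι : Type*} (n : ι → ℕ)

def cyclicRels : Set (FreeGroup ι) := Set.range fun i => FreeGroup.of i ^ n i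

theorem of_pow_eq_one (i : ι) : (of i : PresentedGroup (cyclicRels n)) ^ n i = 1 := by
  rw [of, ← map_pow]
  exact one_of_mem ⟨i, rfl⟩

def toCoprodICyclic :
    PresentedGroup (cyclicRels n) →* CoprodI fun i => Multiplicative (ZMod (n i)) :=
  toGroup (f := fun i => CoprodI.of (M := fun i => Multiplicative (ZMod (n i))) (ofAdd 1)) <| by
    rintro _ ⟨i, rfl⟩
    rw [map_pow, FreeGroup.lift_apply_of, ← map_pow, ← ofAdd_nsmul, nsmul_one, ZMod.natCast_self,
      ofAdd_zero, map_one]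

def ofCoprodICyclic :
    (CoprodI fun i => Multiplicative (ZMod (n i))) →* PresentedGroup (cyclicRels n) :=
  CoprodI.lift fun i => zmodPowersHom (n i) (of i) (of_pow_eq_one n i)

def cyclicEquivCoprodI :
    PresentedGroup (cyclicRels n) ≃* CoprodI fun i => Multiplicative (ZMod (n i)) :=
  MonoidHom.toMulEquiv (toCoprodICyclic n) (ofCoprodICyclic n)
    (ext fun i => by simp [toCoprodICyclic, ofCoprodICyclic, toGroup.of])
    (CoprodI.ext_hom _ _ fun i => MonoidHom.ext_mzmod <| by
      simp [toCoprodICyclic, ofCoprodICyclic, toGroup.of])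

end PresentedGroup

namespace Monoid.CoprodI

theorem NeWord.toList_eq_of_prod_eq {ι : Type*} {M : ι → Type*} [∀ i, Monoid (M i)]
    [DecidableEq ι] [∀ i, DecidableEq (M i)] {i j k l : ι} {w₁ : NeWord M i j} {w₂ : NeWord M k l}
    (h : w₁.prod = w₂.prod) : w₁.toList = w₂.toList :=
  congrArg Word.toList (Word.equiv.symm.injective h)

theorem center_eq_bot {ι : Type*} {G : ι → Type*} [∀ i, Group (G i)] [Nontrivial ι]
    [∀ i, Nontrivial (G i)] : Subgroup.center (CoprodI G) = ⊥ := by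
  classical
  refine (Subgroup.eq_bot_iff_forall _).mpr fun z hz => ?_
  by_contra hz1
  obtain ⟨i, j, w, hw⟩ := NeWord.of_word (Word.equiv z)
    fun h => hz1 (by rw [← Word.equiv.symm_apply_apply z, h]; exact Word.prod_empty)
  replace hw : w.prod = z := by rw [NeWord.prod, hw]; exact Word.equiv.symm_apply_apply z
  obtain ⟨m, hm⟩ := exists_ne j
  obtain ⟨x, hx⟩ := exists_ne (1 : G m)
  -- `w x w⁻¹` is reduced (as `m ≠ j`) and spells `z (of x) z⁻¹ = of x`, yet has length `2 |w| + 1`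
  have hconj := NeWord.toList_eq_of_prod_eq
      (w₁ := (w.append hm.symm (.singleton x hx)).append hm w.inv) (w₂ := .singleton x hx) <| by
    rw [NeWord.append_prod, NeWord.append_prod, NeWord.inv_prod, NeWord.prod_singleton, hw,
      ← (Subgroup.mem_center_iff.mp hz (of x)), mul_inv_cancel_right]
  have := congrArg List.length hconj
  simp only [NeWord.toList, List.length_append, List.length_singleton] at this
  have := List.length_pos_iff.mpr w.toList_ne_nil
  omega

end Monoid.CoprodI

namespace Subgroup

variable {G H : Type*} [Group G] [Group H]

theorem normal_zpowers_of_mem_center {g : G} (hg : g ∈ center G) : (zpowers g).Normal :=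
  ⟨fun a ha h => by rwa [mem_center_iff.mp (zpowers_le.mpr hg ha) h, mul_inv_cancel_right]⟩

theorem normalClosure_singleton_eq_zpowers {g : G} (hg : g ∈ center G) :
    normalClosure {g} = zpowers g :=
  have := normal_zpowers_of_mem_center hg
  le_antisymm (normalClosure_le_normal (Set.singleton_subset_iff.mpr (mem_zpowers g)))
    (zpowers_le.mpr (subset_normalClosure rfl))

theorem center_le_ker_of_surjective {f : G →* H} (hf : Function.Surjective f)
    (hH : center H = ⊥) : center G ≤ f.ker := fun z hz => by
  rw [MonoidHom.mem_ker, ← mem_bot, ← hH, mem_center_iff]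
  intro y
  obtain ⟨x, rfl⟩ := hf y
  rw [← map_mul, ← map_mul, mem_center_iff.mp hz x]

end Subgroup

open Subgroup

theorem relCkZ.center_eq_bot {k : ℕ} (hk : k ≠ 1) :
    center (PresentedGroup (relCkZ k)) = ⊥ := by
  -- `ZMod 0 = ℤ`: the second factor is infinite cyclic, with the trivial relator `of 1 ^ 0`
  have hrels : normalClosure (relCkZ k) = normalClosure (PresentedGroup.cyclicRels ![k, 0]) := by
    refine le_antisymm (normalClosure_mono ?_) (normalClosure_le_normal ?_)
    · rintro _ rfl
      exact ⟨0, rfl⟩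
    · rintro _ ⟨i, rfl⟩
      fin_cases i
      · exact subset_normalClosure rfl
      · simp
  have : ∀ i, Nontrivial (Multiplicative (ZMod (![k, 0] i))) := fun i => by
    fin_cases i
    · exact ZMod.nontrivial_iff.mpr hk
    · exact ZMod.nontrivial_iff.mpr (by simp)
  let e : PresentedGroup (relCkZ k) ≃* _ :=
    (QuotientGroup.quotientMulEquivOfEq hrels).trans (PresentedGroup.cyclicEquivCoprodI ![k, 0])
  have := center_le_ker_of_surjective (f := e.toMonoidHom) e.surjective CoprodI.center_eq_bot
  rwa [e.toMonoidHom.ker_eq_bot e.injective, le_bot_iff] at this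

namespace relEvenDihedral

theorem not_isOfFinOrder_of_zero_pow {k : ℕ} (hk : k ≠ 0) :
    ¬ IsOfFinOrder (PresentedGroup.of 0 ^ k : PresentedGroup (relEvenDihedral k)) := by
  let χ : PresentedGroup (relEvenDihedral k) →* Multiplicative ℤ :=
    PresentedGroup.toGroup (f := ![ofAdd 1, 1]) (by rintro _ rfl; simp)
  intro h
  have := χ.isOfFinOrder h
  rw [isOfFinOrder_iff_eq_one, map_pow, PresentedGroup.toGroup.of] at this
  exact hk (by simpa using this)

variable (k : ℕ)

theorem normalClosure_le_relCkZ :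
    normalClosure (relEvenDihedral k) ≤ normalClosure (relCkZ k) := by
  refine normalClosure_le_normal ?_
  rintro _ rfl
  have ha : FreeGroup.of 0 ^ k ∈ normalClosure (relCkZ k) := subset_normalClosure rfl
  simpa only [mul_assoc, SetLike.mem_coe] using
    mul_mem ha ((normalClosure_normal).conj_mem _ (inv_mem ha) (FreeGroup.of 1))

theorem of_zero_pow_mul_of_one :
    (PresentedGroup.of 0 : PresentedGroup (relEvenDihedral k)) ^ k * .of 1 = .of 1 * .of 0 ^ k := by
  have := PresentedGroup.one_of_mem (rels := relEvenDihedral k) rfl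
  rwa [map_mul, map_mul, map_mul, map_inv, map_inv, mul_inv_eq_one, mul_inv_eq_iff_eq_mul,
    map_pow] at this

theorem of_zero_pow_mem_center :
    (PresentedGroup.of 0 : PresentedGroup (relEvenDihedral k)) ^ k ∈ center _ := by
  refine mem_center_iff.mpr fun g => (mem_centralizer_singleton_iff.mp ?_)
  refine PresentedGroup.generated_by _ _ (fun i => ?_) g
  fin_cases i
  · exact mem_centralizer_singleton_iff.mpr (pow_mul_comm' _ _).symm
  · exact mem_centralizer_singleton_iff.mpr (of_zero_pow_mul_of_one k).symm

instance normal_zpowers_of_zero_pow :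
    (zpowers (PresentedGroup.of 0 ^ k : PresentedGroup (relEvenDihedral k))).Normal :=
  normal_zpowers_of_mem_center (of_zero_pow_mem_center k)

theorem map_normalClosure_relCkZ :
    (normalClosure (relCkZ k)).map (PresentedGroup.mk (relEvenDihedral k)) =
      zpowers (PresentedGroup.of 0 ^ k) := by
  rw [map_normalClosure _ _ (PresentedGroup.mk_surjective _), relCkZ, Set.image_singleton, map_pow]
  exact normalClosure_singleton_eq_zpowers (of_zero_pow_mem_center k)

def quotientZPowersEquiv :
    PresentedGroup (relEvenDihedral k) ⧸ zpowers (PresentedGroup.of 0 ^ k) ≃*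
      PresentedGroup (relCkZ k) :=
  have : ((normalClosure (relCkZ k)).map (PresentedGroup.mk (relEvenDihedral k))).Normal :=
    (map_normalClosure_relCkZ k) ▸ inferInstance
  (QuotientGroup.quotientMulEquivOfEq (map_normalClosure_relCkZ k).symm).trans
    (QuotientGroup.quotientQuotientEquivQuotient _ _ (normalClosure_le_relCkZ k))

end relEvenDihedral

/-- for `A = ⟨a, b | aᵏ b = b aᵏ⟩` with `k ≥ 2`, the centre of `A`
is the infinite cyclic subgroup generated by `c = aᵏ`, and `A/Z(A) ≅ C_k ⋆ ℤ`. -/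
theorem stmt5 (k : ℕ) (hk : 2 ≤ k) :
    Subgroup.center (PresentedGroup (relEvenDihedral k)) =
      Subgroup.zpowers ((PresentedGroup.of 0 : PresentedGroup (relEvenDihedral k)) ^ k) ∧
    ¬ IsOfFinOrder ((PresentedGroup.of 0 : PresentedGroup (relEvenDihedral k)) ^ k) ∧
    Nonempty
      ((PresentedGroup (relEvenDihedral k) ⧸
          Subgroup.center (PresentedGroup (relEvenDihedral k))) ≃*
        PresentedGroup (relCkZ k)) := by
  let e := relEvenDihedral.quotientZPowersEquiv k
  have hcenter :
      center (PresentedGroup (relEvenDihedral k)) = zpowers (PresentedGroup.of 0 ^ k) := by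
    refine le_antisymm ?_ (zpowers_le.mpr (relEvenDihedral.of_zero_pow_mem_center k))
    have := center_le_ker_of_surjective (f := e.toMonoidHom.comp (QuotientGroup.mk' _))
      (e.surjective.comp (QuotientGroup.mk'_surjective _)) (relCkZ.center_eq_bot (by omega))
    rwa [MonoidHom.ker_comp_of_injective _ _ e.injective, QuotientGroup.ker_mk'] at this
  exact ⟨hcenter, relEvenDihedral.not_isOfFinOrder_of_zero_pow (by omega),
    ⟨(QuotientGroup.quotientMulEquivOfEq hcenter).trans e⟩⟩
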